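/- (Cumulative norm upper bound for PRIL.) Let R² = max_{t∈[T]} ‖x^t‖², let v^t = (w^t, θ^t) be the PRIL iterates and m^t = |{i ∈ Ī^t : z_i^t(w^t·x^t − θ_i^t) ≤ 0}|. Then ‖v^{T+1}‖² ≤ R² Σ_{t=1}^T (m^t)² + Σ_{t=1}^T m^t. -/
import Mathlib


open Finset

noncomputable def dotp {d : ℕ} (w x : Fin d → ℝ) : ℝ := ∑ i, w i * x i

noncomputable def zval (yl : ℕ) (i : ℕ) : ℝ := if i < yl then 1 else -1

def Ibar (K yl yr : ℕ) : Finset ℕ := Finset.Icc 1 (yl - 1) ∪ Finset.Icc yr (K - 1)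

noncomputable def tau {d : ℕ} (K yl yr : ℕ) (x w : Fin d → ℝ) (θ : ℕ → ℝ) (i : ℕ) : ℝ :=
  if i ∈ Ibar K yl yr ∧ zval yl i * (dotp w x - θ i) ≤ 0 then zval yl i else 0

noncomputable def LMAE (K : ℕ) (f : ℝ) (θ : ℕ → ℝ) (yl yr : ℕ) : ℝ :=
  (∑ i ∈ Finset.Icc 1 (yl - 1), if f < θ i then (1:ℝ) else 0) +
  (∑ i ∈ Finset.Icc yr (K - 1), if θ i ≤ f then (1:ℝ) else 0)

noncomputable def LIMC (K : ℕ) (f : ℝ) (yl yr : ℕ) (θ : ℕ → ℝ) : ℝ :=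
  (∑ i ∈ Finset.Icc 1 (yl - 1), max 0 (θ i - f)) +
  (∑ i ∈ Finset.Icc yr (K - 1), max 0 (f - θ i))

noncomputable def mcount {d : ℕ} (K yl yr : ℕ) (x w : Fin d → ℝ) (θ : ℕ → ℝ) : ℕ :=
  ((Ibar K yl yr).filter (fun i => zval yl i * (dotp w x - θ i) ≤ 0)).card

lemma zval_sq (yl i : ℕ) : (zval yl i)^2 = 1 := by
  unfold zval; split <;> norm_num

lemma Ibar_subset {K yl yr : ℕ} (h1 : 1 ≤ yl) (h2 : yl ≤ yr) (h3 : yr ≤ K) :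
    Ibar K yl yr ⊆ Finset.Icc 1 (K-1) := by
  intro i hi
  simp only [Ibar, Finset.mem_union, Finset.mem_Icc] at hi
  simp only [Finset.mem_Icc]
  omega

lemma pril_step {d K yl yr : ℕ} (h1 : 1 ≤ yl) (h2 : yl ≤ yr) (h3 : yr ≤ K)
    (x w : Fin d → ℝ) (θ : ℕ → ℝ) :
    (∑ i, (w i + (∑ j ∈ Finset.Icc 1 (K-1), tau K yl yr x w θ j) * x i)^2)
      + (∑ i ∈ Finset.Icc 1 (K-1), (θ i - tau K yl yr x w θ i)^2)
    ≤ (∑ i, (w i)^2) + (∑ i ∈ Finset.Icc 1 (K-1), (θ i)^2)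
      + (∑ i, (x i)^2) * (mcount K yl yr x w θ : ℝ)^2 + (mcount K yl yr x w θ : ℝ) := by
  classical
  have hsub := Ibar_subset (K := K) h1 h2 h3
  set τ : ℕ → ℝ := tau K yl yr x w θ with hτ
  set S : ℝ := ∑ j ∈ Finset.Icc 1 (K-1), τ j with hSdef
  set m : ℝ := (mcount K yl yr x w θ : ℝ) with hm
  have hcard : ((Finset.Icc 1 (K-1)).filter
      (fun i => i ∈ Ibar K yl yr ∧ zval yl i * (dotp w x - θ i) ≤ 0)).card
      = mcount K yl yr x w θ := by
    unfold mcount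
    congr 1
    ext i
    simp only [Finset.mem_filter]
    exact ⟨fun ⟨_, hb, hq⟩ => ⟨hb, hq⟩, fun ⟨hb, hq⟩ => ⟨hsub hb, hb, hq⟩⟩
  have hτsq : ∑ i ∈ Finset.Icc 1 (K-1), (τ i)^2 = m := by
    have : ∀ i ∈ Finset.Icc 1 (K-1), (τ i)^2 =
        if i ∈ Ibar K yl yr ∧ zval yl i * (dotp w x - θ i) ≤ 0 then (1:ℝ) else 0 := by
      intro i _
      rw [hτ]; unfold tau
      split
      · exact zval_sq yl i
      · norm_num
    rw [Finset.sum_congr rfl this, Finset.sum_boole, hcard, hm]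
  have hτabs : ∑ i ∈ Finset.Icc 1 (K-1), |τ i| = m := by
    have : ∀ i ∈ Finset.Icc 1 (K-1), |τ i| =
        if i ∈ Ibar K yl yr ∧ zval yl i * (dotp w x - θ i) ≤ 0 then (1:ℝ) else 0 := by
      intro i _
      rw [hτ]; unfold tau
      split
      · unfold zval; split <;> norm_num
      · norm_num
    rw [Finset.sum_congr rfl this, Finset.sum_boole, hcard, hm]
  have hSabs : |S| ≤ m := by
    calc |S| ≤ ∑ i ∈ Finset.Icc 1 (K-1), |τ i| := Finset.abs_sum_le_sum_abs _ _
    _ = m := hτabs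
  have hS2 : S^2 ≤ m^2 := by
    have h0 : (0:ℝ) ≤ |S| := abs_nonneg S
    nlinarith [sq_abs S]
  have hneg : ∑ i ∈ Finset.Icc 1 (K-1), τ i * (dotp w x - θ i) ≤ 0 := by
    apply Finset.sum_nonpos
    intro i _
    rw [hτ]; unfold tau
    split
    · next h => exact h.2
    · simp
  have ew : ∑ i, (w i + S * x i)^2
      = (∑ i, (w i)^2) + 2 * S * dotp w x + S^2 * (∑ i, (x i)^2) := by
    have h : ∀ i : Fin d, (w i + S * x i)^2
        = (w i)^2 + (2*S) * (w i * x i) + S^2 * (x i)^2 := fun i => by ring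
    rw [Finset.sum_congr rfl fun i _ => h i, Finset.sum_add_distrib,
      Finset.sum_add_distrib, ← Finset.mul_sum, ← Finset.mul_sum]
    unfold dotp; ring
  have eθ : ∑ i ∈ Finset.Icc 1 (K-1), (θ i - τ i)^2
      = (∑ i ∈ Finset.Icc 1 (K-1), (θ i)^2)
        - 2 * (∑ i ∈ Finset.Icc 1 (K-1), τ i * θ i) + m := by
    rw [← hτsq, Finset.mul_sum, ← Finset.sum_sub_distrib, ← Finset.sum_add_distrib]
    exact Finset.sum_congr rfl fun i _ => by ring
  have key : S * dotp w x - (∑ i ∈ Finset.Icc 1 (K-1), τ i * θ i)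
      = ∑ i ∈ Finset.Icc 1 (K-1), τ i * (dotp w x - θ i) := by
    rw [hSdef, Finset.sum_mul, ← Finset.sum_sub_distrib]
    exact Finset.sum_congr rfl fun i _ => by ring
  have hx2 : (0:ℝ) ≤ ∑ i, (x i)^2 := Finset.sum_nonneg fun i _ => sq_nonneg _
  rw [ew, eθ]
  nlinarith [key, hneg, mul_le_mul_of_nonneg_left hS2 hx2]

/-- Cumulative norm upper bound for PRIL. -/
theorem pril_cumulative_norm_bound
    {d K T : ℕ} (hd : 1 ≤ d) (hK : 2 ≤ K) (hT : 1 ≤ T)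
    (x : ℕ → Fin d → ℝ) (yl yr : ℕ → ℕ)
    (hy : ∀ t ∈ Finset.Icc 1 T, 1 ≤ yl t ∧ yl t ≤ yr t ∧ yr t ≤ K)
    (w : ℕ → Fin d → ℝ) (θ : ℕ → ℕ → ℝ)
    (hw1 : w 1 = 0) (hθ1 : ∀ i, θ 1 i = 0)
    (hwrec : ∀ t ∈ Finset.Icc 1 T,
      w (t+1) = w t + (∑ i ∈ Finset.Icc 1 (K-1),
        tau K (yl t) (yr t) (x t) (w t) (θ t) i) • x t)
    (hθrec : ∀ t ∈ Finset.Icc 1 T, ∀ i,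
      θ (t+1) i = θ t i - tau K (yl t) (yr t) (x t) (w t) (θ t) i)
    (R2 : ℝ)
    (hR2 : R2 = (Finset.Icc 1 T).sup' (Finset.nonempty_Icc.mpr hT)
      (fun t => ∑ i, (x t i) ^ 2)) :
    (∑ i, (w (T+1) i) ^ 2) + (∑ i ∈ Finset.Icc 1 (K-1), (θ (T+1) i) ^ 2)
      ≤ R2 * (∑ t ∈ Finset.Icc 1 T, (mcount K (yl t) (yr t) (x t) (w t) (θ t) : ℝ) ^ 2)
        + ∑ t ∈ Finset.Icc 1 T, (mcount K (yl t) (yr t) (x t) (w t) (θ t) : ℝ) := by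
  classical
  have main : ∀ t, t ≤ T →
      (∑ i, (w (t+1) i) ^ 2) + (∑ i ∈ Finset.Icc 1 (K-1), (θ (t+1) i) ^ 2)
      ≤ ∑ s ∈ Finset.Icc 1 t,
          ((∑ i, (x s i)^2) * (mcount K (yl s) (yr s) (x s) (w s) (θ s) : ℝ)^2
            + (mcount K (yl s) (yr s) (x s) (w s) (θ s) : ℝ)) := by
    intro t
    induction t with
    | zero => intro _; simp [hw1, hθ1]
    | succ n ih =>
      intro hn
      have hmem : n+1 ∈ Finset.Icc 1 T := by simp; omega
      obtain ⟨ha, hb, hc⟩ := hy (n+1) hmem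
      have hrw := hwrec (n+1) hmem
      have hrθ := hθrec (n+1) hmem
      have hstep := pril_step (d := d) ha hb hc (x (n+1)) (w (n+1)) (θ (n+1))
      have ih' := ih (by omega)
      rw [Finset.sum_Icc_succ_top (by omega : 1 ≤ n+1)]
      have ewp : ∀ i, w (n+1+1) i
          = w (n+1) i + (∑ j ∈ Finset.Icc 1 (K-1),
              tau K (yl (n+1)) (yr (n+1)) (x (n+1)) (w (n+1)) (θ (n+1)) j) * x (n+1) i := by
        intro i; rw [hrw]; simp [smul_eq_mul]
      have eθp : ∀ i, θ (n+1+1) i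
          = θ (n+1) i - tau K (yl (n+1)) (yr (n+1)) (x (n+1)) (w (n+1)) (θ (n+1)) i :=
        hrθ
      calc (∑ i, (w (n+1+1) i) ^ 2) + (∑ i ∈ Finset.Icc 1 (K-1), (θ (n+1+1) i) ^ 2)
          = (∑ i, (w (n+1) i + (∑ j ∈ Finset.Icc 1 (K-1),
              tau K (yl (n+1)) (yr (n+1)) (x (n+1)) (w (n+1)) (θ (n+1)) j) * x (n+1) i)^2)
            + (∑ i ∈ Finset.Icc 1 (K-1), (θ (n+1) i
              - tau K (yl (n+1)) (yr (n+1)) (x (n+1)) (w (n+1)) (θ (n+1)) i)^2) := by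
            congr 1
            · exact Finset.sum_congr rfl fun i _ => by rw [ewp i]
            · exact Finset.sum_congr rfl fun i _ => by rw [eθp i]
        _ ≤ (∑ i, (w (n+1) i)^2) + (∑ i ∈ Finset.Icc 1 (K-1), (θ (n+1) i)^2)
            + (∑ i, (x (n+1) i)^2)
              * (mcount K (yl (n+1)) (yr (n+1)) (x (n+1)) (w (n+1)) (θ (n+1)) : ℝ)^2
            + (mcount K (yl (n+1)) (yr (n+1)) (x (n+1)) (w (n+1)) (θ (n+1)) : ℝ) := hstep
        _ ≤ _ := by linarith
  have hmain := main T le_rfl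
  have hbound : ∀ s ∈ Finset.Icc 1 T,
      (∑ i, (x s i)^2) * (mcount K (yl s) (yr s) (x s) (w s) (θ s) : ℝ)^2
        + (mcount K (yl s) (yr s) (x s) (w s) (θ s) : ℝ)
      ≤ R2 * (mcount K (yl s) (yr s) (x s) (w s) (θ s) : ℝ)^2
        + (mcount K (yl s) (yr s) (x s) (w s) (θ s) : ℝ) := by
    intro s hs
    have hle : (∑ i, (x s i)^2) ≤ R2 := by
      rw [hR2]; exact Finset.le_sup' (fun t => ∑ i, (x t i)^2) hs
    have := mul_le_mul_of_nonneg_right hle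
      (sq_nonneg ((mcount K (yl s) (yr s) (x s) (w s) (θ s) : ℝ)))
    linarith
  calc (∑ i, (w (T+1) i) ^ 2) + (∑ i ∈ Finset.Icc 1 (K-1), (θ (T+1) i) ^ 2)
      ≤ ∑ s ∈ Finset.Icc 1 T,
          ((∑ i, (x s i)^2) * (mcount K (yl s) (yr s) (x s) (w s) (θ s) : ℝ)^2
            + (mcount K (yl s) (yr s) (x s) (w s) (θ s) : ℝ)) := hmain
    _ ≤ ∑ s ∈ Finset.Icc 1 T,
          (R2 * (mcount K (yl s) (yr s) (x s) (w s) (θ s) : ℝ)^2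
            + (mcount K (yl s) (yr s) (x s) (w s) (θ s) : ℝ)) :=
        Finset.sum_le_sum hbound
    _ = R2 * (∑ t ∈ Finset.Icc 1 T, (mcount K (yl t) (yr t) (x t) (w t) (θ t) : ℝ) ^ 2)
        + ∑ t ∈ Finset.Icc 1 T, (mcount K (yl t) (yr t) (x t) (w t) (θ t) : ℝ) := by
        rw [Finset.mul_sum, ← Finset.sum_add_distrib]
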